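/- Define the local truncation error ξ̇ := y'(t+τ) − y'(t−τ) + 2ω·sin(ωτ)·y(t) + ∫₀^τ [cos(ω(τ−w))/ε²]·[2g(t) + w²g''(t)] dw. Then |ξ̇| ≤ [τ⁴/(6ε²)]·∫₀^τ ∫₀¹ (|g⁽⁴⁾(t+ρw)| + |g⁽⁴⁾(t−ρw)|) dρ dw. -/

import Mathlib

open MeasureTheory intervalIntegral

private lemma comp_add_hasDerivAt {f : ℝ → ℂ} {f' : ℂ} {t s : ℝ}
    (hf : HasDerivAt f f' (t + s)) : HasDerivAt (fun u => f (t + u)) f' s := by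
  have h1 : HasDerivAt (fun u : ℝ => t + u) 1 s := (hasDerivAt_id s).const_add t
  have := hf.scomp s h1
  simp only [one_smul] at this
  exact this

private lemma comp_sub_hasDerivAt {f : ℝ → ℂ} {f' : ℂ} {t s : ℝ}
    (hf : HasDerivAt f f' (t - s)) : HasDerivAt (fun u => f (t - u)) (-f') s := by
  have h1 : HasDerivAt (fun u : ℝ => t - u) (-1) s := (hasDerivAt_id s).const_sub t
  have := hf.scomp s h1
  simp only [neg_smul, one_smul] at this
  exact this

private lemma hasDerivAt_iter_comp (g : ℝ → ℂ) (hg : ContDiff ℝ 4 g) (k : ℕ) (hk : k < 4)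
    (a w ρ : ℝ) :
    HasDerivAt (fun ρ : ℝ => iteratedDeriv k g (a + ρ * w))
      ((w : ℂ) * iteratedDeriv (k + 1) g (a + ρ * w)) ρ := by
  have hdiff : Differentiable ℝ (iteratedDeriv k g) :=
    hg.differentiable_iteratedDeriv k (by exact_mod_cast hk)
  have houter : HasDerivAt (iteratedDeriv k g) (iteratedDeriv (k + 1) g (a + ρ * w))
      (a + ρ * w) := by
    have := (hdiff (a + ρ * w)).hasDerivAt
    rwa [← iteratedDeriv_succ] at this
  have hinner : HasDerivAt (fun ρ : ℝ => a + ρ * w) w ρ := by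
    simpa using ((hasDerivAt_id ρ).mul_const w).const_add a
  have := houter.scomp ρ hinner
  simp only [Complex.real_smul] at this
  exact this

private lemma taylor4 (g : ℝ → ℂ) (hg : ContDiff ℝ 4 g) (a w : ℝ) :
    g (a + w) = g a + (w : ℂ) * iteratedDeriv 1 g a + (w : ℂ) ^ 2 / 2 * iteratedDeriv 2 g a
      + (w : ℂ) ^ 3 / 6 * iteratedDeriv 3 g a
      + (w : ℂ) ^ 4 * ∫ ρ in (0:ℝ)..1, (((1 - ρ) ^ 3 / 6 : ℝ) : ℂ)
          * iteratedDeriv 4 g (a + ρ * w) := by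
  set F : ℝ → ℂ := fun ρ =>
    iteratedDeriv 0 g (a + ρ * w)
    + (((1 - ρ) * w : ℝ) : ℂ) * iteratedDeriv 1 g (a + ρ * w)
    + (((1 - ρ) * w : ℝ) : ℂ) * (((1 - ρ) * w : ℝ) : ℂ) * iteratedDeriv 2 g (a + ρ * w) / 2
    + (((1 - ρ) * w : ℝ) : ℂ) * (((1 - ρ) * w : ℝ) : ℂ) * (((1 - ρ) * w : ℝ) : ℂ)
        * iteratedDeriv 3 g (a + ρ * w) / 6 with hF
  have hc : ∀ ρ : ℝ, HasDerivAt (fun ρ : ℝ => (((1 - ρ) * w : ℝ) : ℂ)) (-(w : ℂ)) ρ := by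
    intro ρ
    have : HasDerivAt (fun ρ : ℝ => (1 - ρ) * w) (-w) ρ := by
      simpa using (((hasDerivAt_id ρ).const_sub 1).mul_const w)
    simpa using this.ofReal_comp
  have hFderiv : ∀ ρ : ℝ, HasDerivAt F
      ((w : ℂ) ^ 4 * ((((1 - ρ) ^ 3 / 6 : ℝ)) : ℂ) * iteratedDeriv 4 g (a + ρ * w)) ρ := by
    intro ρ
    have h0 := hasDerivAt_iter_comp g hg 0 (by norm_num) a w ρ
    have h1 := hasDerivAt_iter_comp g hg 1 (by norm_num) a w ρ
    have h2 := hasDerivAt_iter_comp g hg 2 (by norm_num) a w ρ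
    have h3 := hasDerivAt_iter_comp g hg 3 (by norm_num) a w ρ
    have hcρ := hc ρ
    have hT1 := (hcρ.mul h1)
    have hT2 := ((hcρ.mul hcρ).mul h2).div_const 2
    have hT3 := (((hcρ.mul hcρ).mul hcρ).mul h3).div_const 6
    have := ((h0.add hT1).add hT2).add hT3
    refine this.congr_deriv ?_
    simp only [Pi.mul_apply]
    push_cast
    ring
  have hcont : Continuous fun ρ : ℝ =>
      (w : ℂ) ^ 4 * ((((1 - ρ) ^ 3 / 6 : ℝ)) : ℂ) * iteratedDeriv 4 g (a + ρ * w) := by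
    have h4 : Continuous (iteratedDeriv 4 g) := hg.continuous_iteratedDeriv 4 (by norm_num)
    fun_prop
  have hint : ∫ ρ in (0:ℝ)..1,
      (w : ℂ) ^ 4 * ((((1 - ρ) ^ 3 / 6 : ℝ)) : ℂ) * iteratedDeriv 4 g (a + ρ * w)
      = F 1 - F 0 :=
    intervalIntegral.integral_eq_sub_of_hasDerivAt (fun ρ _ => hFderiv ρ)
      (hcont.intervalIntegrable 0 1)
  have hF1 : F 1 = g (a + w) := by simp [hF, iteratedDeriv_zero]
  have hF0 : F 0 = g a + (w : ℂ) * iteratedDeriv 1 g a + (w : ℂ) ^ 2 / 2 * iteratedDeriv 2 g a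
      + (w : ℂ) ^ 3 / 6 * iteratedDeriv 3 g a := by
    simp [hF, iteratedDeriv_zero]
    ring
  have hpull : ∫ ρ in (0:ℝ)..1,
      (w : ℂ) ^ 4 * ((((1 - ρ) ^ 3 / 6 : ℝ)) : ℂ) * iteratedDeriv 4 g (a + ρ * w)
      = (w : ℂ) ^ 4 * ∫ ρ in (0:ℝ)..1, ((((1 - ρ) ^ 3 / 6 : ℝ)) : ℂ)
          * iteratedDeriv 4 g (a + ρ * w) := by
    rw [← intervalIntegral.integral_const_mul]
    congr 1
    ext ρ
    ring
  rw [← hpull, hint, hF1, hF0]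
  ring

lemma taylor_sym (g : ℝ → ℂ) (hg : ContDiff ℝ 4 g) (t w : ℝ) :
    2 * g t + (w : ℂ) ^ 2 * iteratedDeriv 2 g t - (g (t + w) + g (t - w))
    = -((w : ℂ) ^ 4 * ∫ ρ in (0:ℝ)..1, (((1 - ρ) ^ 3 / 6 : ℝ) : ℂ)
        * (iteratedDeriv 4 g (t + ρ * w) + iteratedDeriv 4 g (t - ρ * w))) := by
  have h4 : Continuous (iteratedDeriv 4 g) := hg.continuous_iteratedDeriv 4 (by norm_num)
  have h1 := taylor4 g hg t w
  have h2 := taylor4 g hg t (-w)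
  rw [show t + -w = t - w from by ring] at h2
  simp only [show ∀ ρ : ℝ, t + ρ * -w = t - ρ * w from fun ρ => by ring] at h2
  simp only [Complex.ofReal_neg] at h2
  have hA : Continuous fun ρ : ℝ => (((1 - ρ) ^ 3 / 6 : ℝ) : ℂ) * iteratedDeriv 4 g (t + ρ * w) := by
    fun_prop
  have hB : Continuous fun ρ : ℝ => (((1 - ρ) ^ 3 / 6 : ℝ) : ℂ) * iteratedDeriv 4 g (t - ρ * w) := by
    fun_prop
  have merge : ∫ ρ in (0:ℝ)..1, (((1 - ρ) ^ 3 / 6 : ℝ) : ℂ)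
        * (iteratedDeriv 4 g (t + ρ * w) + iteratedDeriv 4 g (t - ρ * w))
      = (∫ ρ in (0:ℝ)..1, (((1 - ρ) ^ 3 / 6 : ℝ) : ℂ) * iteratedDeriv 4 g (t + ρ * w))
      + ∫ ρ in (0:ℝ)..1, (((1 - ρ) ^ 3 / 6 : ℝ) : ℂ) * iteratedDeriv 4 g (t - ρ * w) := by
    rw [← intervalIntegral.integral_add (hA.intervalIntegrable 0 1) (hB.intervalIntegrable 0 1)]
    apply intervalIntegral.integral_congr
    intro ρ _
    ring
  rw [merge]
  linear_combination (-1 : ℂ) * h1 - h2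

private lemma voc (ε ω : ℝ) (hε : (ε:ℂ)^2 ≠ 0) (hω0 : ω ≠ 0)
    (g : ℝ → ℂ) (hgc : Continuous g) (y : ℝ → ℂ) (hy : ContDiff ℝ 2 y)
    (hode : ∀ x, deriv (deriv y) x = -((ω:ℂ))^2 * y x - ((ε:ℂ)^2)⁻¹ * g x)
    (t : ℝ) (s : ℝ) :
    deriv y (t+s) - deriv y (t-s) + 2*(ω:ℂ)*((Real.sin (ω*s) : ℝ):ℂ) * y t
      + ((ε:ℂ)^2)⁻¹ * ∫ w in (0:ℝ)..s, ((Real.cos (ω*(s-w)) : ℝ):ℂ) * (g (t+w) + g (t-w)) = 0 := by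
  have hωc : (ω:ℂ) ≠ 0 := by exact_mod_cast hω0
  set G : ℝ → ℂ := fun w => g (t+w) + g (t-w) with hGdef
  have hG : Continuous G := by fun_prop
  set cs : ℝ → ℂ := fun u => ((Real.cos (ω*u) : ℝ):ℂ) with hcsdef
  set sn : ℝ → ℂ := fun u => ((Real.sin (ω*u) : ℝ):ℂ) with hsndef
  have hcsc : Continuous cs := by fun_prop
  have hsnc : Continuous sn := by fun_prop
  set P : ℝ → ℂ := fun u => ∫ w in (0:ℝ)..u, cs w * G w with hPdef
  set Q : ℝ → ℂ := fun u => ∫ w in (0:ℝ)..u, sn w * G w with hQdef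
  have hPd : ∀ u, HasDerivAt P (cs u * G u) u := by
    intro u
    exact intervalIntegral.integral_hasDerivAt_right
      ((hcsc.mul hG).intervalIntegrable 0 u)
      ((hcsc.mul hG).stronglyMeasurableAtFilter _ _)
      (hcsc.mul hG).continuousAt
  have hQd : ∀ u, HasDerivAt Q (sn u * G u) u := by
    intro u
    exact intervalIntegral.integral_hasDerivAt_right
      ((hsnc.mul hG).intervalIntegrable 0 u)
      ((hsnc.mul hG).stronglyMeasurableAtFilter _ _)
      (hsnc.mul hG).continuousAt
  have hsnd : ∀ u, HasDerivAt sn ((ω:ℂ) * cs u) u := by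
    intro u
    have hinner : HasDerivAt (fun x : ℝ => ω*x) ω u := by
      simpa using (hasDerivAt_id u).const_mul ω
    have hr : HasDerivAt (fun u => Real.sin (ω*u)) (Real.cos (ω*u) * ω) u :=
      (Real.hasDerivAt_sin (ω*u)).comp u hinner
    have := hr.ofReal_comp
    simp only [hsndef]
    convert this using 1
    simp only [hcsdef, Complex.ofReal_mul]; ring
  have hcsd : ∀ u, HasDerivAt cs (-(ω:ℂ) * sn u) u := by
    intro u
    have hinner : HasDerivAt (fun x : ℝ => ω*x) ω u := by
      simpa using (hasDerivAt_id u).const_mul ω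
    have hr : HasDerivAt (fun u => Real.cos (ω*u)) (-Real.sin (ω*u) * ω) u :=
      (Real.hasDerivAt_cos (ω*u)).comp u hinner
    have := hr.ofReal_comp
    simp only [hcsdef]
    convert this using 1
    simp only [hsndef, Complex.ofReal_mul, Complex.ofReal_neg]; ring
  have hydiff : Differentiable ℝ y := hy.differentiable (by norm_num)
  have hy1 : ContDiff ℝ 1 (deriv y) := by
    have := (contDiff_succ_iff_deriv.mp (by exact_mod_cast hy : ContDiff ℝ (1+1) y)).2.2
    exact_mod_cast this
  have hy'diff : Differentiable ℝ (deriv y) := hy1.differentiable one_ne_zero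
  set A : ℝ → ℂ := fun u => deriv y (t+u) - deriv y (t-u) + 2*(ω:ℂ)*sn u*y t
      + ((ε:ℂ)^2)⁻¹ * (cs u * P u + sn u * Q u) with hAdef
  set B : ℝ → ℂ := fun u => y (t+u) + y (t-u) - 2*cs u*y t
      + (ω:ℂ)⁻¹ * ((ε:ℂ)^2)⁻¹ * (sn u * P u - cs u * Q u) with hBdef
  have hBd : ∀ u, HasDerivAt B (A u) u := by
    intro u
    have h1 : HasDerivAt (fun u => y (t+u)) (deriv y (t+u)) u :=
      comp_add_hasDerivAt (hydiff (t+u)).hasDerivAt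
    have h2 : HasDerivAt (fun u => y (t-u)) (-(deriv y (t-u))) u :=
      comp_sub_hasDerivAt (hydiff (t-u)).hasDerivAt
    have h3 : HasDerivAt (fun u => 2*cs u*y t) (2*(-(ω:ℂ) * sn u)*y t) u := by
      exact (((hcsd u).const_mul 2).mul_const (y t))
    have h4 : HasDerivAt (fun u => (ω:ℂ)⁻¹ * ((ε:ℂ)^2)⁻¹ * (sn u * P u - cs u * Q u))
        ((ω:ℂ)⁻¹ * ((ε:ℂ)^2)⁻¹ * (((ω:ℂ) * cs u) * P u + sn u * (cs u * G u)
          - ((-(ω:ℂ) * sn u) * Q u + cs u * (sn u * G u)))) u := by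
      exact ((((hsnd u).mul (hPd u)).sub ((hcsd u).mul (hQd u))).const_mul _)
    have := ((h1.add h2).sub h3).add h4
    simp only [hAdef, hBdef]
    refine this.congr_deriv ?_
    symm
    field_simp
    ring
  have hAd : ∀ u, HasDerivAt A (-((ω:ℂ))^2 * B u) u := by
    intro u
    have h1 : HasDerivAt (fun u => deriv y (t+u)) (deriv (deriv y) (t+u)) u :=
      comp_add_hasDerivAt (hy'diff (t+u)).hasDerivAt
    have h2 : HasDerivAt (fun u => deriv y (t-u)) (-(deriv (deriv y) (t-u))) u :=
      comp_sub_hasDerivAt (hy'diff (t-u)).hasDerivAt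
    have h3 : HasDerivAt (fun u => 2*(ω:ℂ)*sn u*y t) (2*(ω:ℂ)*((ω:ℂ) * cs u)*y t) u := by
      exact (((hsnd u).const_mul (2*(ω:ℂ))).mul_const (y t))
    have h4 : HasDerivAt (fun u => ((ε:ℂ)^2)⁻¹ * (cs u * P u + sn u * Q u))
        (((ε:ℂ)^2)⁻¹ * (((-(ω:ℂ) * sn u) * P u + cs u * (cs u * G u))
          + (((ω:ℂ) * cs u) * Q u + sn u * (sn u * G u)))) u := by
      exact ((((hcsd u).mul (hPd u)).add ((hsnd u).mul (hQd u))).const_mul _)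
    have hbig := ((h1.sub h2).add h3).add h4
    simp only [hAdef, hBdef]
    refine hbig.congr_deriv ?_
    symm
    rw [hode (t+u), hode (t-u)]
    have htrig : cs u ^ 2 + sn u ^ 2 = 1 := by
      simp only [hcsdef, hsndef]
      exact_mod_cast congrArg (Complex.ofReal) (Real.cos_sq_add_sin_sq (ω*u))
    field_simp
    linear_combination (-((ε:ℂ)⁻¹)^2*(g (t+u)+g (t-u))) * htrig
  have hA0 : A 0 = 0 := by
    simp [hAdef, hPdef, hQdef, hsndef, hcsdef]
  have hB0 : B 0 = 0 := by
    simp [hBdef, hPdef, hQdef, hsndef, hcsdef]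
    ring
  -- C± := exp(∓iωs)(A ± iωB) are constant, zero at 0
  have key : ∀ (c : ℂ), c * c = -(ω:ℂ)^2 → ∀ u, A u + c * B u = 0 := by
    intro c hc u
    set C : ℝ → ℂ := fun u => Complex.exp (-(c*u)) * (A u + c * B u) with hCdef
    have hCd : ∀ u, HasDerivAt C 0 u := by
      intro u
      have hlin : HasDerivAt (fun u : ℝ => -(c*(u:ℂ))) (-c) u := by
        have h0 : HasDerivAt (fun u : ℝ => ((u:ℝ):ℂ)) 1 u := Complex.ofRealCLM.hasDerivAt
        have := (h0.const_mul c).neg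
        simp only [mul_one] at this
        exact this
      have hexp := hlin.cexp
      have hin := (hAd u).add ((hBd u).const_mul c)
      have := hexp.mul hin
      simp only [hCdef]
      refine this.congr_deriv ?_
      symm
      simp only [Pi.add_apply]
      linear_combination Complex.exp (-(c*u)) * B u * hc
    have hconst : ∀ v : ℝ, C v = C 0 := by
      intro v
      exact is_const_of_deriv_eq_zero (fun x => (hCd x).differentiableAt)
        (fun x => (hCd x).deriv) v 0
    have hC0 : C 0 = 0 := by
      simp [hCdef, hA0, hB0]
    have := (hconst u).trans hC0
    simp only [hCdef] at this
    rcases mul_eq_zero.mp this with h | h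
    · exact absurd h (Complex.exp_ne_zero _)
    · exact h
  have hplus := key (Complex.I * ω) (by
    have := Complex.I_mul_I
    linear_combination (ω:ℂ)^2 * Complex.I_mul_I) 
  have hminus := key (-(Complex.I * ω)) (by
    linear_combination (ω:ℂ)^2 * Complex.I_mul_I)
  have hAzero : A s = 0 := by
    have h1 := hplus s
    have h2 := hminus s
    linear_combination (h1 + h2) / 2
  -- translate
  have hsplit : ∫ w in (0:ℝ)..s, ((Real.cos (ω*(s-w)) : ℝ):ℂ) * G w = cs s * P s + sn s * Q s := by
    simp only [hPdef, hQdef]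
    rw [← intervalIntegral.integral_const_mul, ← intervalIntegral.integral_const_mul,
      ← intervalIntegral.integral_add (f := fun x => cs s * (cs x * G x)) (g := fun x => sn s * (sn x * G x)) ((continuous_const.mul (hcsc.mul hG)).intervalIntegrable 0 s)
        ((continuous_const.mul (hsnc.mul hG)).intervalIntegrable 0 s)]
    apply intervalIntegral.integral_congr
    intro w _
    simp only [hcsdef, hsndef]
    rw [show ω*(s-w) = ω*s - ω*w from by ring, Real.cos_sub]
    push_cast
    ring
  have := hAzero
  simp only [hAdef] at this
  rw [hsplit]
  convert this using 2

/-- Bound on the local truncation error `ξ̇` of the symmetric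
Gautschi-type quadrature for the derivative, for the oscillatory ODE
`ε²y'' + (μ² + ε⁻²)y + g = 0` with `ω = √(ε²μ²+1)/ε²`. -/
theorem truncation_error_bound_deriv
    (ε μ : ℝ) (hε : 0 < ε)
    (ω : ℝ) (hω : ω = Real.sqrt (ε ^ 2 * μ ^ 2 + 1) / ε ^ 2)
    (g : ℝ → ℂ) (hg : ContDiff ℝ 4 g)
    (y : ℝ → ℂ) (hy : ContDiff ℝ 2 y)
    (hode : ∀ t : ℝ,
      (ε : ℂ) ^ 2 * deriv (deriv y) t + ((μ : ℂ) ^ 2 + ((ε : ℂ) ^ 2)⁻¹) * y t + g t = 0)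
    (t τ : ℝ) (hτ : 0 < τ)
    (ξdot : ℂ)
    (hξdot : ξdot = deriv y (t + τ) - deriv y (t - τ)
      + 2 * ((ω * Real.sin (ω * τ) : ℝ) : ℂ) * y t
      + ∫ w in (0:ℝ)..τ, ((Real.cos (ω * (τ - w)) / ε ^ 2 : ℝ) : ℂ)
          * (2 * g t + (w : ℂ) ^ 2 * iteratedDeriv 2 g t)) :
    ‖ξdot‖ ≤ (τ ^ 4 / (6 * ε ^ 2))
      * ∫ w in (0:ℝ)..τ, ∫ ρ in (0:ℝ)..1,
          (‖iteratedDeriv 4 g (t + ρ * w)‖ + ‖iteratedDeriv 4 g (t - ρ * w)‖) := by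
  have hεne : (ε:ℝ) ≠ 0 := ne_of_gt hε
  have hε2 : ((ε:ℂ))^2 ≠ 0 := by
    have : (ε:ℂ) ≠ 0 := by exact_mod_cast hεne
    exact pow_ne_zero 2 this
  have hωpos : 0 < ω := by
    rw [hω]
    apply div_pos (Real.sqrt_pos.mpr (by positivity)) (by positivity)
  have hω0 : ω ≠ 0 := ne_of_gt hωpos
  have h4c : Continuous (iteratedDeriv 4 g) := hg.continuous_iteratedDeriv 4 (by norm_num)
  -- real frequency identity
  have hωsq : ω^2 * ε^2 = μ^2 + (ε^2)⁻¹ := by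
    rw [hω, div_pow, Real.sq_sqrt (by positivity)]
    field_simp
  have hcsq : ((ω:ℂ))^2 * ((ε:ℂ))^2 = (μ:ℂ)^2 + (((ε:ℂ))^2)⁻¹ := by
    exact_mod_cast congrArg Complex.ofReal hωsq
  have hinv : ((ε:ℂ))^2 * (((ε:ℂ))^2)⁻¹ = 1 := mul_inv_cancel₀ hε2
  have hode' : ∀ x, deriv (deriv y) x = -((ω:ℂ))^2 * y x - ((ε:ℂ)^2)⁻¹ * g x := by
    intro x
    apply mul_left_cancel₀ hε2
    linear_combination hode x + (y x) * hcsq + (g x) * hinv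
  have hvoc := voc ε ω hε2 hω0 g hg.continuous y hy hode' t τ
  -- rewrite ξdot as a single integral
  set c : ℝ → ℂ := fun w => ((Real.cos (ω*(τ-w)) : ℝ):ℂ) with hcdef
  have hcc : Continuous c := by fun_prop
  set F : ℝ → ℂ := fun w => c w * ((ε:ℂ)^2)⁻¹
      * (2 * g t + (w : ℂ) ^ 2 * iteratedDeriv 2 g t - (g (t+w) + g (t-w))) with hFdef
  have hgcont : Continuous g := hg.continuous
  have hint1 : IntervalIntegrable (fun w => c w * ((ε:ℂ)^2)⁻¹
      * (2 * g t + (w : ℂ) ^ 2 * iteratedDeriv 2 g t)) volume 0 τ := by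
    apply Continuous.intervalIntegrable; fun_prop
  have hint2 : IntervalIntegrable (fun w => c w * ((ε:ℂ)^2)⁻¹ * (g (t+w) + g (t-w)))
      volume 0 τ := by
    apply Continuous.intervalIntegrable; fun_prop
  have hξF : ξdot = ∫ w in (0:ℝ)..τ, F w := by
    have hX : deriv y (t + τ) - deriv y (t - τ) + 2 * ((ω * Real.sin (ω * τ) : ℝ) : ℂ) * y t
        = -(((ε:ℂ)^2)⁻¹ * ∫ w in (0:ℝ)..τ, c w * (g (t+w) + g (t-w))) := by
      simp only [Complex.ofReal_mul]
      linear_combination hvoc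
    have e1 : ((ε:ℂ)^2)⁻¹ * (∫ w in (0:ℝ)..τ, c w * (g (t+w) + g (t-w)))
        = ∫ w in (0:ℝ)..τ, c w * ((ε:ℂ)^2)⁻¹ * (g (t+w) + g (t-w)) := by
      rw [← intervalIntegral.integral_const_mul]
      apply intervalIntegral.integral_congr
      intro w _; ring
    have e2 : (∫ w in (0:ℝ)..τ, ((Real.cos (ω * (τ - w)) / ε ^ 2 : ℝ) : ℂ)
          * (2 * g t + (w : ℂ) ^ 2 * iteratedDeriv 2 g t))
        = ∫ w in (0:ℝ)..τ, c w * ((ε:ℂ)^2)⁻¹ * (2 * g t + (w : ℂ) ^ 2 * iteratedDeriv 2 g t) := by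
      apply intervalIntegral.integral_congr
      intro w _
      simp only [hcdef]
      push_cast
      ring
    rw [hξdot, hX, e1, e2, neg_add_eq_sub, ← intervalIntegral.integral_sub hint1 hint2]
    apply intervalIntegral.integral_congr
    intro w _
    simp only [hFdef]
    ring
  -- the scalar bound function
  set J : ℝ → ℝ := fun w => ∫ ρ in (0:ℝ)..1,
      (‖iteratedDeriv 4 g (t + ρ * w)‖ + ‖iteratedDeriv 4 g (t - ρ * w)‖) with hJdef
  have hJcont : Continuous J := by
    apply intervalIntegral.continuous_parametric_intervalIntegral_of_continuous'
      (f := fun w ρ => ‖iteratedDeriv 4 g (t + ρ * w)‖ + ‖iteratedDeriv 4 g (t - ρ * w)‖)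
    apply Continuous.add
    · apply Continuous.norm; apply h4c.comp; fun_prop
    · apply Continuous.norm; apply h4c.comp; fun_prop
  have hJnonneg : ∀ w, 0 ≤ J w := by
    intro w
    apply intervalIntegral.integral_nonneg zero_le_one
    intro ρ _
    positivity
  -- pointwise bound
  have hptwise : ∀ w ∈ Set.Ioc (0:ℝ) τ, ‖F w‖ ≤ (τ ^ 4 / (6 * ε ^ 2)) * J w := by
    intro w hw
    have hw0 : (0:ℝ) ≤ w := hw.1.le
    have hwτ : w ≤ τ := hw.2
    -- inner integral bound
    set I : ℂ := ∫ ρ in (0:ℝ)..1, (((1 - ρ) ^ 3 / 6 : ℝ) : ℂ)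
        * (iteratedDeriv 4 g (t + ρ * w) + iteratedDeriv 4 g (t - ρ * w)) with hIdef
    have hIbound : ‖I‖ ≤ (1/6) * J w := by
      have hb : IntervalIntegrable (fun ρ : ℝ => (1/6 : ℝ) *
          (‖iteratedDeriv 4 g (t + ρ * w)‖ + ‖iteratedDeriv 4 g (t - ρ * w)‖)) volume 0 1 := by
        apply Continuous.intervalIntegrable
        apply continuous_const.mul
        apply Continuous.add
        · apply Continuous.norm; apply h4c.comp; fun_prop
        · apply Continuous.norm; apply h4c.comp; fun_prop
      have hae : ∀ᵐ ρ ∂(volume.restrict (Set.uIoc (0:ℝ) 1)),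
          ‖(((1 - ρ) ^ 3 / 6 : ℝ) : ℂ)
            * (iteratedDeriv 4 g (t + ρ * w) + iteratedDeriv 4 g (t - ρ * w))‖
          ≤ (1/6 : ℝ) * (‖iteratedDeriv 4 g (t + ρ * w)‖ + ‖iteratedDeriv 4 g (t - ρ * w)‖) := by
        filter_upwards [ae_restrict_mem measurableSet_uIoc] with ρ hρ
        rw [Set.uIoc_of_le zero_le_one] at hρ
        have h1ρ : 0 ≤ 1 - ρ := by linarith [hρ.2]
        have h1ρ' : 1 - ρ ≤ 1 := by linarith [hρ.1]
        rw [norm_mul, Complex.norm_real]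
        have habs : |(1 - ρ)^3 / 6| ≤ 1/6 := by
          rw [abs_div, abs_of_nonneg (by positivity : (0:ℝ) ≤ (1-ρ)^3)]
          have : (1-ρ)^3 ≤ 1 := pow_le_one₀ h1ρ h1ρ'
          rw [abs_of_nonneg (by norm_num : (0:ℝ) ≤ (6:ℝ))]
          linarith
        exact mul_le_mul habs (norm_add_le _ _) (norm_nonneg _) (by norm_num)
      have := intervalIntegral.norm_integral_le_abs_of_norm_le hae hb
      rw [hIdef]
      refine this.trans ?_
      rw [intervalIntegral.integral_const_mul]
      rw [abs_of_nonneg (mul_nonneg (by norm_num) (hJnonneg w))]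
    have hFeq : ‖F w‖ = |Real.cos (ω*(τ-w))| * ((ε^2)⁻¹ * (w^4 * ‖I‖)) := by
      have : F w = c w * ((ε:ℂ)^2)⁻¹ * (-((w:ℂ)^4 * I)) := by
        rw [hFdef]
        simp only
        rw [taylor_sym g hg t w, hIdef]
      rw [this]
      simp only [norm_mul, norm_neg, norm_inv, norm_pow, hcdef, Complex.norm_real,
        Real.norm_eq_abs, abs_of_pos hε, abs_of_nonneg hw0]
      ring
    rw [hFeq]
    calc |Real.cos (ω*(τ-w))| * ((ε^2)⁻¹ * (w^4 * ‖I‖))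
        ≤ 1 * ((ε^2)⁻¹ * (τ^4 * ((1/6) * J w))) := by
          have hJw := hJnonneg w
          apply mul_le_mul (Real.abs_cos_le_one _)
          · apply mul_le_mul le_rfl
            · apply mul_le_mul (pow_le_pow_left₀ hw0 hwτ 4) hIbound (norm_nonneg _)
                (by positivity)
            · positivity
            · positivity
          · positivity
          · norm_num
      _ = (τ ^ 4 / (6 * ε ^ 2)) * J w := by
          ring
  -- conclude
  have hboundint : IntervalIntegrable (fun w => (τ ^ 4 / (6 * ε ^ 2)) * J w) volume 0 τ :=
    (continuous_const.mul hJcont).intervalIntegrable 0 τ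
  have hae2 : ∀ᵐ w ∂(volume.restrict (Set.uIoc (0:ℝ) τ)),
      ‖F w‖ ≤ (τ ^ 4 / (6 * ε ^ 2)) * J w := by
    filter_upwards [ae_restrict_mem measurableSet_uIoc] with w hw
    rw [Set.uIoc_of_le hτ.le] at hw
    exact hptwise w hw
  have hmain := intervalIntegral.norm_integral_le_abs_of_norm_le hae2 hboundint
  rw [← hξF] at hmain
  refine hmain.trans ?_
  rw [intervalIntegral.integral_const_mul]
  rw [abs_of_nonneg]
  apply mul_nonneg (by positivity)
  apply intervalIntegral.integral_nonneg hτ.le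
  intro w _
  exact hJnonneg w
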